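/- Let E be a nonzero c-semistable object of 𝒜 with v(cl E) = 1, and assume the set {cl F : F a subobject of E} ⊆ Γ is finite. Let E′ be a subobject of E with E′ ≠ E such that, for all sufficiently small ε > 0, the chain 0 ⊆ E′ ⊆ E is the (c−ε)-HN filtration of E (that is: either E′ = 0 and E is (c−ε)-semistable, or E′ ≠ 0, both E′ and E/E′ are (c−ε)-semistable, and μ_{c−ε}(E′) > μ_{c−ε}(E/E′)). If E is c⁺-stable, then the quotient E/E′ is c-stable. -/

import Mathlib

open CategoryTheory CategoryTheory.Limits

/-- Cross-multiplied comparison `μ_c(x) ≤ μ_c(y)` of the slopes `μ_c = (d + c·v)/r`. -/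
def slopeLE {Γ : Type*} [AddCommGroup Γ] (d r : Γ →+ ℝ) (v : Γ →+ ℤ) (c : ℝ)
    (x y : Γ) : Prop :=
  (d x + c * (v x : ℝ)) * r y ≤ (d y + c * (v y : ℝ)) * r x

/-- Cross-multiplied comparison `μ_c(x) < μ_c(y)` of the slopes `μ_c = (d + c·v)/r`. -/
def slopeLT {Γ : Type*} [AddCommGroup Γ] (d r : Γ →+ ℝ) (v : Γ →+ ℤ) (c : ℝ)
    (x y : Γ) : Prop :=
  (d x + c * (v x : ℝ)) * r y < (d y + c * (v y : ℝ)) * r x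

/-- A nonzero object `E` is `c`-semistable if `μ_c(F) ≤ μ_c(E)` for every subobject
`F ⊆ E` with `F ≠ 0`, `F ≠ E`. -/
def IsSemistableAt {C : Type*} [Category C] [Abelian C] {Γ : Type*} [AddCommGroup Γ]
    (cl : C → Γ) (d r : Γ →+ ℝ) (v : Γ →+ ℤ) (c : ℝ) (E : C) : Prop :=
  ∀ (F : C) (f : F ⟶ E), Mono f → ¬ IsZero F → ¬ IsIso f →
    slopeLE d r v c (cl F) (cl E)

/-- A nonzero object `E` is `c`-stable if `μ_c(F) < μ_c(E)` for every subobject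
`F ⊆ E` with `F ≠ 0`, `F ≠ E`. -/
def IsStableAt {C : Type*} [Category C] [Abelian C] {Γ : Type*} [AddCommGroup Γ]
    (cl : C → Γ) (d r : Γ →+ ℝ) (v : Γ →+ ℤ) (c : ℝ) (E : C) : Prop :=
  ∀ (F : C) (f : F ⟶ E), Mono f → ¬ IsZero F → ¬ IsIso f →
    slopeLT d r v c (cl F) (cl E)

/-- `E` is `c⁺`-stable if it is `(c+ε)`-stable for all sufficiently small `ε > 0`. -/
def IsPlusStableAt {C : Type*} [Category C] [Abelian C] {Γ : Type*} [AddCommGroup Γ]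
    (cl : C → Γ) (d r : Γ →+ ℝ) (v : Γ →+ ℤ) (c : ℝ) (E : C) : Prop :=
  ∃ δ > (0 : ℝ), ∀ ε : ℝ, 0 < ε → ε < δ → IsStableAt cl d r v (c + ε) E

/-- `E` is `c⁻`-stable if it is `(c−ε)`-stable for all sufficiently small `ε > 0`. -/
def IsMinusStableAt {C : Type*} [Category C] [Abelian C] {Γ : Type*} [AddCommGroup Γ]
    (cl : C → Γ) (d r : Γ →+ ℝ) (v : Γ →+ ℤ) (c : ℝ) (E : C) : Prop :=
  ∃ δ > (0 : ℝ), ∀ ε : ℝ, 0 < ε → ε < δ → IsStableAt cl d r v (c - ε) E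
/-
For a proper nonzero `F ⊆ Q = E/E'` with quotient `K`, let `G ⊆ E` be the preimage of `F`.
Letting `ε → 0` in the `(c-ε)`-HN data, together with `c`-semistability of `E`, gives
`μ_c(F) ≤ μ_c(Q) ≤ μ_c(E') ≤ μ_c(E)`. If `μ_c(F) = μ_c(Q)`, the see-saw property makes the
central charges of `E'`, `F`, `K` (and hence `G`, `E`) collinear at `c`, so the inequalities at
`c ± ε` are decided by the framing ranks alone. Since `v(E) = 1`, exactly one of `E'`, `F`, `K`
has framing rank one, and each case contradicts one of: `μ_{c-ε}(Q) < μ_{c-ε}(E')`,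
`μ_{c+ε}(G) < μ_{c+ε}(E)`, `μ_{c-ε}(F) ≤ μ_{c-ε}(Q)`. When `E' = 0` one simply averages the
inequalities for `G ⊆ E` at `c - ε` and `c + ε`, slope comparisons being affine in `c`.
-/

section Slope

variable {Γ : Type*} [AddCommGroup Γ] (d r : Γ →+ ℝ) (v : Γ →+ ℤ)

/-- `slopeGap d r v c x y` is the determinant of the central charges of `x` and `y` at `c`; it is
bilinear and alternating, and its sign compares `μ_c(x)` with `μ_c(y)`. -/
def slopeGap (c : ℝ) (x y : Γ) : ℝ :=
  (d x + c * v x) * r y - (d y + c * v y) * r x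

/-- The derivative of `slopeGap d r v c x y` in `c`. -/
def rankGap (x y : Γ) : ℝ :=
  v x * r y - v y * r x

/-- The positivity enjoyed by the class of a nonzero object. -/
def IsEffective (x : Γ) : Prop :=
  0 ≤ r x ∧ 0 ≤ v x ∧ (r x = 0 → 0 < d x ∧ v x = 0)

variable {d r v}

theorem slopeLE_iff_slopeGap_nonpos {c : ℝ} {x y : Γ} :
    slopeLE d r v c x y ↔ slopeGap d r v c x y ≤ 0 :=
  sub_nonpos.symm

theorem slopeLT_iff_slopeGap_neg {c : ℝ} {x y : Γ} :
    slopeLT d r v c x y ↔ slopeGap d r v c x y < 0 :=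
  sub_neg.symm

theorem slopeGap_add_param (c t : ℝ) (x y : Γ) :
    slopeGap d r v (c + t) x y = slopeGap d r v c x y + t * rankGap r v x y := by
  unfold slopeGap rankGap; ring

theorem slopeGap_sub_param (c t : ℝ) (x y : Γ) :
    slopeGap d r v (c - t) x y = slopeGap d r v c x y - t * rankGap r v x y := by
  unfold slopeGap rankGap; ring

theorem slopeGap_swap (c : ℝ) (x y : Γ) : slopeGap d r v c y x = -slopeGap d r v c x y := by
  unfold slopeGap; ring

theorem slopeGap_add_left (c : ℝ) (x y z : Γ) :
    slopeGap d r v c (x + y) z = slopeGap d r v c x z + slopeGap d r v c y z := by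
  simp only [slopeGap, map_add, Int.cast_add]; ring

theorem slopeGap_add_right (c : ℝ) (x y z : Γ) :
    slopeGap d r v c x (y + z) = slopeGap d r v c x y + slopeGap d r v c x z := by
  simp only [slopeGap, map_add, Int.cast_add]; ring

theorem slopeGap_self (c : ℝ) (x : Γ) : slopeGap d r v c x x = 0 := by
  unfold slopeGap; ring

theorem slopeGap_plucker (c : ℝ) (x y z : Γ) :
    slopeGap d r v c x y * r z + slopeGap d r v c y z * r x + slopeGap d r v c z x * r y = 0 := by
  unfold slopeGap; ring

theorem slopeGap_eq_zero_trans {c : ℝ} {x y z : Γ} (hxy : slopeGap d r v c x y = 0)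
    (hyz : slopeGap d r v c y z = 0) (hy : r y ≠ 0) : slopeGap d r v c x z = 0 := by
  have h := slopeGap_plucker (d := d) (r := r) (v := v) c x y z
  rw [hxy, hyz, zero_mul, zero_mul, zero_add, zero_add] at h
  rw [← neg_eq_zero, ← slopeGap_swap]
  exact (mul_eq_zero.1 h).resolve_right hy

theorem IsEffective.add {x y : Γ} (hx : IsEffective d r v x) (hy : IsEffective d r v y) :
    IsEffective d r v (x + y) := by
  obtain ⟨hrx, hvx, hx0⟩ := hx
  obtain ⟨hry, hvy, hy0⟩ := hy
  refine ⟨by rw [map_add]; positivity, by rw [map_add]; positivity, fun h => ?_⟩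
  rw [map_add] at h
  obtain ⟨hdx, hvx0⟩ := hx0 (by linarith)
  obtain ⟨hdy, hvy0⟩ := hy0 (by linarith)
  rw [map_add, map_add, hvx0, hvy0]
  exact ⟨by linarith, rfl⟩

theorem slopeLE_of_forall_sub {c δ : ℝ} {x y : Γ} (hδ : 0 < δ)
    (h : ∀ ε : ℝ, 0 < ε → ε < δ → slopeLE d r v (c - ε) x y) : slopeLE d r v c x y := by
  rw [slopeLE_iff_slopeGap_nonpos]
  have hlim : Filter.Tendsto (fun ε => slopeGap d r v (c - ε) x y) (nhdsWithin 0 (Set.Ioi 0))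
      (nhds (slopeGap d r v c x y)) := by
    simp only [slopeGap_sub_param]
    exact ((by fun_prop : Continuous fun ε : ℝ => slopeGap d r v c x y - ε * rankGap r v x y).tendsto'
      0 _ (by simp)).mono_left nhdsWithin_le_nhds
  refine le_of_tendsto hlim ?_
  filter_upwards [Ioo_mem_nhdsGT hδ] with ε hε
  exact slopeLE_iff_slopeGap_nonpos.1 (h ε hε.1 hε.2)

theorem slopeLT_of_slopeLE_sub_of_slopeLT_add {c ε : ℝ} {x y : Γ}
    (hsub : slopeLE d r v (c - ε) x y) (hadd : slopeLT d r v (c + ε) x y) :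
    slopeLT d r v c x y := by
  rw [slopeLE_iff_slopeGap_nonpos, slopeGap_sub_param] at hsub
  rw [slopeLT_iff_slopeGap_neg, slopeGap_add_param] at hadd
  rw [slopeLT_iff_slopeGap_neg]
  linarith

theorem slopeGap_add_add_eq_zero {c : ℝ} {e f k : Γ} (hfq : slopeGap d r v c f (f + k) = 0)
    (hqe : slopeGap d r v c (f + k) e = 0) (hq : r (f + k) ≠ 0) :
    slopeGap d r v c (e + f) (e + f + k) = 0 := by
  have hef : slopeGap d r v c e f = 0 :=
    slopeGap_eq_zero_trans (by rw [slopeGap_swap, hqe, neg_zero])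
      (by rw [slopeGap_swap, hfq, neg_zero]) hq
  have hfk : slopeGap d r v c f k = 0 := by
    rwa [slopeGap_add_right, slopeGap_self, zero_add] at hfq
  have hek : slopeGap d r v c e k = 0 := by
    rwa [slopeGap_swap, slopeGap_add_right, hef, zero_add, neg_eq_zero] at hqe
  rw [slopeGap_add_right, slopeGap_self, zero_add, slopeGap_add_left, hek, hfk, add_zero]

/-- `e'`, `f`, `k` stand for the classes of `E'`, of `F ⊆ E/E'` and of `(E/E')/F`. -/
theorem slopeLT_of_hn_wall {c ε : ℝ} {e' f k : Γ} (he' : IsEffective d r v e')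
    (hf : IsEffective d r v f) (hk : IsEffective d r v k) (hv : v (e' + f + k) = 1) (hε : 0 < ε)
    (hsst : slopeLE d r v c e' (e' + f + k)) (hQE' : slopeLE d r v c (f + k) e')
    (hFQ : slopeLE d r v c f (f + k)) (hFQ_sub : slopeLE d r v (c - ε) f (f + k))
    (hQE'_sub : slopeLT d r v (c - ε) (f + k) e')
    (hGE_add : slopeLT d r v (c + ε) (e' + f) (e' + f + k)) :
    slopeLT d r v c f (f + k) := by
  rw [slopeLT_iff_slopeGap_neg]
  by_contra hnot
  rw [slopeLE_iff_slopeGap_nonpos] at hsst hQE' hFQ hFQ_sub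
  rw [slopeLT_iff_slopeGap_neg] at hQE'_sub hGE_add
  have hfq : slopeGap d r v c f (f + k) = 0 := le_antisymm hFQ (not_lt.1 hnot)
  have hqe' : slopeGap d r v c (f + k) e' = 0 := by
    rw [add_assoc, slopeGap_add_right, slopeGap_self, zero_add, ← neg_nonneg, ← slopeGap_swap]
      at hsst
    exact le_antisymm hQE' hsst
  have hrank : 0 < rankGap r v (f + k) e' := by
    rw [slopeGap_sub_param, hqe', zero_sub, neg_lt_zero] at hQE'_sub
    exact pos_of_mul_pos_right hQE'_sub hε.le
  have hq := hf.add hk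
  have hrq : r (f + k) ≠ 0 := fun h0 => by
    simp [rankGap, h0, (hq.2.2 h0).2] at hrank
  have hgk := slopeGap_add_add_eq_zero hfq hqe' hrq
  obtain ⟨-, hve', -⟩ := he'
  obtain ⟨hrf, hvf, hf0⟩ := hf
  obtain ⟨hrk, hvk, -⟩ := hk
  rw [map_add, map_add] at hv
  rcases (by omega : v e' = 1 ∧ v f = 0 ∧ v k = 0 ∨ v e' = 0 ∧ v f = 1 ∧ v k = 0 ∨
      v e' = 0 ∧ v f = 0 ∧ v k = 1) with ⟨h1, h2, h3⟩ | ⟨h1, h2, h3⟩ | ⟨-, h2, h3⟩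
  · simp only [rankGap, map_add, h1, h2, h3] at hrank
    push_cast at hrank
    linarith [hq.1]
  · rw [slopeGap_add_param, hgk] at hGE_add
    simp only [rankGap, map_add, h1, h2, h3] at hGE_add
    push_cast at hGE_add
    nlinarith
  · rw [slopeGap_sub_param, hfq] at hFQ_sub
    simp only [rankGap, map_add, h2, h3] at hFQ_sub
    push_cast at hFQ_sub
    have hrf0 : r f = 0 := le_antisymm (by nlinarith) hrf
    have hdf : d f * r (f + k) = 0 := by simpa [slopeGap, hrf0, h2] using hfq
    exact mul_ne_zero (hf0 hrf0).1.ne' hrq hdf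

end Slope

section Abelian

variable {C : Type*} [Category C] [Abelian C] {Γ : Type*} [AddCommGroup Γ] {cl : C → Γ}

theorem cl_eq_add_cl_cokernel
    (hses : ∀ S : ShortComplex C, S.ShortExact → cl S.X₂ = cl S.X₁ + cl S.X₃)
    {X Y : C} (u : X ⟶ Y) [Mono u] : cl Y = cl X + cl (cokernel u) :=
  hses (ShortComplex.mk u (cokernel.π u) (cokernel.condition u))
    (ShortComplex.ShortExact.mk' (ShortComplex.exact_cokernel u) inferInstance inferInstance)

theorem not_isZero_cokernel_of_not_isIso {X Y : C} {u : X ⟶ Y} [Mono u] (hu : ¬IsIso u) :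
    ¬IsZero (cokernel u) := fun h =>
  hu (haveI := Preadditive.epi_of_isZero_cokernel u h; isIso_of_mono_of_epi u)

/-- The preimage `G` in `E` of a proper nonzero subobject `F` of `E/E'`. -/
theorem exists_preimage_of_subobject_cokernel
    (hses : ∀ S : ShortComplex C, S.ShortExact → cl S.X₂ = cl S.X₁ + cl S.X₃)
    {E' E F : C} (f : E' ⟶ E) [Mono f] (g : F ⟶ cokernel f) [Mono g] (hF : ¬IsZero F)
    (hg : ¬IsIso g) :
    ∃ (G : C) (ι : G ⟶ E), Mono ι ∧ ¬IsZero G ∧ ¬IsIso ι ∧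
      cl G = cl E' + cl F ∧ cl E = cl G + cl (cokernel g) := by
  set p := cokernel.π f ≫ cokernel.π g
  have hclE : cl E = cl (kernel p) + cl (cokernel g) :=
    hses (ShortComplex.mk (kernel.ι p) p (kernel.condition p))
      (ShortComplex.ShortExact.mk' (ShortComplex.exact_kernel p) inferInstance inferInstance)
  refine ⟨kernel p, kernel.ι p, inferInstance, fun hG => hF ?_, fun hι => ?_, ?_, hclE⟩
  · have := Preadditive.mono_of_isZero_kernel p hG
    have : Mono (cokernel.π f) := mono_of_mono _ (cokernel.π g)
    have := isIso_of_mono_of_epi (cokernel.π f)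
    have : Mono (cokernel.π g) := by
      rw [← IsIso.inv_hom_id_assoc (cokernel.π f) (cokernel.π g)]
      infer_instance
    exact IsZero.of_mono_eq_zero g ((cancel_mono (cokernel.π g)).1 (by simp))
  · have hp : p = 0 := by
      rw [← cancel_epi (kernel.ι p), kernel.condition, comp_zero]
    exact not_isZero_cokernel_of_not_isIso hg (IsZero.of_epi_eq_zero p hp)
  · refine add_right_cancel (b := cl (cokernel g)) ?_
    rw [← hclE, add_assoc, ← cl_eq_add_cl_cokernel hses g, ← cl_eq_add_cl_cokernel hses f]

end Abelian

theorem stmt_7_general {C : Type*} [Category C] [Abelian C] {Γ : Type*} [AddCommGroup Γ]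
    (cl : C → Γ) (d r : Γ →+ ℝ) (v : Γ →+ ℤ)
    (hcl0 : ∀ X : C, IsZero X → cl X = 0)
    (hses : ∀ S : ShortComplex C, S.ShortExact → cl S.X₂ = cl S.X₁ + cl S.X₃)
    (hpos : ∀ X : C, ¬ IsZero X →
      0 ≤ r (cl X) ∧ 0 ≤ v (cl X) ∧ (r (cl X) = 0 → 0 < d (cl X) ∧ v (cl X) = 0))
    (E : C) (hvE : v (cl E) = 1) (c : ℝ)
    (hsst : IsSemistableAt cl d r v c E)
    (E' : C) (f : E' ⟶ E) (hf : Mono f) (hne : ¬ IsIso f)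
    (hHN : ∃ δ > (0 : ℝ), ∀ ε : ℝ, 0 < ε → ε < δ →
      ((IsZero E' ∧ IsSemistableAt cl d r v (c - ε) E) ∨
       (¬ IsZero E' ∧ IsSemistableAt cl d r v (c - ε) E' ∧
         IsSemistableAt cl d r v (c - ε) (cokernel f) ∧
         slopeLT d r v (c - ε) (cl (cokernel f)) (cl E'))))
    (hplus : IsPlusStableAt cl d r v c E) :
    IsStableAt cl d r v c (cokernel f) := by
  intro F g hg hF hgiso
  obtain ⟨G, ι, hι, hG, hιiso, hclG, hclE⟩ :=
    exists_preimage_of_subobject_cokernel hses f g hF hgiso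
  obtain ⟨δ, hδ, hHN⟩ := hHN
  obtain ⟨δ', hδ', hplus⟩ := hplus
  obtain ⟨ε, hε, hεδ, hεδ'⟩ : ∃ ε, 0 < ε ∧ ε < δ ∧ ε < δ' :=
    ⟨min δ δ' / 2, by positivity, by linarith [min_le_left δ δ'], by linarith [min_le_right δ δ']⟩
  have hGE_add := hplus ε hε hεδ' G ι hι hG hιiso
  have hclQ := cl_eq_add_cl_cokernel hses g
  by_cases hE' : IsZero E'
  · have hE_sub := ((hHN ε hε hεδ).resolve_right fun h => h.1 hE').2
    have := slopeLT_of_slopeLE_sub_of_slopeLT_add (hE_sub G ι hι hG hιiso) hGE_add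
    rwa [hclE, hclG, hcl0 E' hE', zero_add, ← hclQ] at this
  · have hQ : ∀ ε, 0 < ε → ε < δ → slopeLE d r v (c - ε) (cl F) (cl (cokernel f)) ∧
        slopeLT d r v (c - ε) (cl (cokernel f)) (cl E') := fun ε hε hεδ => by
      obtain ⟨-, -, hQ_sub, hQE'_sub⟩ := (hHN ε hε hεδ).resolve_left fun h => hE' h.1
      exact ⟨hQ_sub F g hg hF hgiso, hQE'_sub⟩
    have hE'E := hsst E' f hf hE' hne
    rw [hclG] at hclE hGE_add
    rw [hclE] at hE'E hvE hGE_add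
    rw [hclQ] at hQ ⊢
    exact slopeLT_of_hn_wall (hpos E' hE') (hpos F hF)
      (hpos _ (not_isZero_cokernel_of_not_isIso hgiso)) hvE hε hE'E
      (slopeLE_of_forall_sub hδ fun ε hε hεδ => (hQ ε hε hεδ).2.le)
      (slopeLE_of_forall_sub hδ fun ε hε hεδ => (hQ ε hε hεδ).1)
      (hQ ε hε hεδ).1 (hQ ε hε hεδ).2 hGE_add

/-- Let `E` be a nonzero `c`-semistable object with `v(cl E) = 1` and let `E' ⊊ E` be such
that `0 ⊆ E' ⊆ E` is the `(c−ε)`-HN filtration of `E` for all small `ε > 0`. If `E` is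
`c⁺`-stable then the quotient `E/E'` is `c`-stable. -/
theorem stmt_7 {C : Type*} [Category C] [Abelian C] {Γ : Type*} [AddCommGroup Γ]
    (cl : C → Γ) (d r : Γ →+ ℝ) (v : Γ →+ ℤ)
    (hcl0 : ∀ X : C, IsZero X → cl X = 0)
    (hses : ∀ S : ShortComplex C, S.ShortExact → cl S.X₂ = cl S.X₁ + cl S.X₃)
    (hpos : ∀ X : C, ¬ IsZero X →
      0 ≤ r (cl X) ∧ 0 ≤ v (cl X) ∧ (r (cl X) = 0 → 0 < d (cl X) ∧ v (cl X) = 0))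
    (E : C) (hE : ¬ IsZero E) (hvE : v (cl E) = 1) (c : ℝ)
    (hsst : IsSemistableAt cl d r v c E)
    (hfin : {g : Γ | ∃ (F : C) (f : F ⟶ E), Mono f ∧ cl F = g}.Finite)
    (E' : C) (f : E' ⟶ E) (hf : Mono f) (hne : ¬ IsIso f)
    (hHN : ∃ δ > (0 : ℝ), ∀ ε : ℝ, 0 < ε → ε < δ →
      ((IsZero E' ∧ IsSemistableAt cl d r v (c - ε) E) ∨
       (¬ IsZero E' ∧ IsSemistableAt cl d r v (c - ε) E' ∧
         IsSemistableAt cl d r v (c - ε) (cokernel f) ∧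
         slopeLT d r v (c - ε) (cl (cokernel f)) (cl E'))))
    (hplus : IsPlusStableAt cl d r v c E) :
    IsStableAt cl d r v c (cokernel f) :=
  stmt_7_general cl d r v hcl0 hses hpos E hvE c hsst E' f hf hne hHN hplus
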